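/- arXiv:2405.09823 — 5 statements merged into one kernel-verified Lean document; each statement's English description precedes it below -/
import Mathlib

section
/- Let R > 1, let k ≤ −1 be an integer, and let x ∈ [3^k, 3^{k+1}). Define 𝒴₁(k) = 1/(−k) and recursively 𝒴_m(k) = 1/(1 − ln(𝒴_{m−1}(k))) for m ≥ 2. Then ℒ₁(x/R) < 𝒴₁(k), and for every integer m ≥ 2, ℒ_m(x/R) < 𝒴_m(k). -/
open Real

/-- `Lrec m t` is the iterated logarithmic function `ℒ_m(t)`, with `ℒ₀(t) = t`,
`ℒ₁(t) = 1/(1 - log t)` and `ℒ_m = ℒ₁ ∘ ℒ_{m-1}`. -/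
noncomputable def Lrec : ℕ → ℝ → ℝ
  | 0, t => t
  | m + 1, t => 1 / (1 - Real.log (Lrec m t))

/-- `Yrec m x` is the comparison quantity `𝒴_m(x)`: `𝒴₁(x) = 1/(-x)` and
`𝒴_m(x) = 1/(1 - log 𝒴_{m-1}(x))` for `m ≥ 2`. -/
noncomputable def Yrec : ℕ → ℝ → ℝ
  | 0, x => x
  | 1, x => 1 / (-x)
  | m + 2, x => 1 / (1 - Real.log (Yrec (m + 1) x))

/-!
Both sides are obtained by iterating `ℒ₁(t) = 1/(1 - log t)`, which maps `(0, 1]` into itself and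
is strictly increasing there; so it suffices to compare the first terms. Since `x/R < 3^(k+1) ≤ 1`
and `log 3 > 1`, we get `log (x/R) < (k+1) log 3 ≤ k + 1`, i.e. `ℒ₁(x/R) < 1/(-k) = 𝒴₁(k)`.
-/

lemma one_div_one_sub_log_mem_Ioc {t : ℝ} (ht : t ∈ Set.Ioc 0 1) :
    1 / (1 - log t) ∈ Set.Ioc 0 1 := by
  have hlog : log t ≤ 0 := log_nonpos ht.1.le ht.2
  exact ⟨one_div_pos.mpr (by linarith), (div_le_one (by linarith)).mpr (by linarith)⟩

lemma strictMonoOn_one_div_one_sub_log :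
    StrictMonoOn (fun t : ℝ => 1 / (1 - log t)) (Set.Ioc 0 1) := by
  intro s hs t ht hst
  have hlog_lt : log s < log t := log_lt_log hs.1 hst
  have hlog_t : log t ≤ 0 := log_nonpos ht.1.le ht.2
  exact one_div_lt_one_div_of_lt (by linarith) (by linarith)

lemma Lrec_one (t : ℝ) : Lrec 1 t = 1 / (1 - log t) := rfl

lemma Lrec_succ (m : ℕ) (t : ℝ) : Lrec (m + 1) t = Lrec m (Lrec 1 t) := by
  induction m with
  | zero => rfl
  | succ m ih =>
    show 1 / (1 - log (Lrec (m + 1) t)) = _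
    rw [ih]; rfl

lemma Yrec_succ (m : ℕ) (x : ℝ) : Yrec (m + 1) x = Lrec m (Yrec 1 x) := by
  induction m with
  | zero => rfl
  | succ m ih =>
    show 1 / (1 - log (Yrec (m + 1) x)) = _
    rw [ih]; rfl

lemma mapsTo_Lrec (m : ℕ) : Set.MapsTo (Lrec m) (Set.Ioc 0 1) (Set.Ioc 0 1) := by
  induction m with
  | zero => exact Set.mapsTo_id _
  | succ m ih => exact fun t ht => one_div_one_sub_log_mem_Ioc (ih ht)

lemma strictMonoOn_Lrec (m : ℕ) : StrictMonoOn (Lrec m) (Set.Ioc 0 1) := by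
  induction m with
  | zero => exact strictMono_id.strictMonoOn _
  | succ m ih =>
    exact strictMonoOn_one_div_one_sub_log.comp ih (mapsTo_Lrec m)

lemma log_lt_of_lt_three_zpow {x : ℝ} {n : ℤ} (hx : 0 < x) (hn : n ≤ 0) (h : x < 3 ^ n) :
    log x < n :=
  calc log x < log ((3 : ℝ) ^ n) := log_lt_log hx h
    _ = n * log 3 := log_zpow 3 n
    _ ≤ n * 1 := mul_le_mul_of_nonpos_left
        (le_log_iff_exp_le three_pos |>.mpr exp_one_lt_three.le) (by exact_mod_cast hn)
    _ = n := mul_one _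

theorem Lrec_lt_Yrec (R : ℝ) (hR : 1 < R) (k : ℤ) (hk : k ≤ -1) (x : ℝ)
    (hx : x ∈ Set.Ico ((3 : ℝ) ^ k) ((3 : ℝ) ^ (k + 1))) :
    Lrec 1 (x / R) < Yrec 1 (k : ℝ) ∧
      ∀ m : ℕ, 2 ≤ m → Lrec m (x / R) < Yrec m (k : ℝ) := by
  obtain ⟨hx_ge, hx_lt⟩ := hx
  have hx_pos : 0 < x := (zpow_pos three_pos k).trans_le hx_ge
  have hxR_pos : 0 < x / R := div_pos hx_pos (by linarith)
  have hxR_lt : x / R < 3 ^ (k + 1) := (div_lt_self hx_pos hR).trans hx_lt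
  have hlog : log (x / R) < k + 1 := by
    exact_mod_cast log_lt_of_lt_three_zpow hxR_pos (by omega) hxR_lt
  have hxR_mem : x / R ∈ Set.Ioc 0 1 :=
    ⟨hxR_pos, hxR_lt.le.trans (zpow_le_one_of_nonpos₀ (by norm_num) (by omega))⟩
  have hk' : (1 : ℝ) ≤ -k := by
    have : (k : ℝ) ≤ -1 := by exact_mod_cast hk
    linarith
  have hY_mem : Yrec 1 (k : ℝ) ∈ Set.Ioc 0 1 :=
    ⟨one_div_pos.mpr (by linarith), (div_le_one (by linarith)).mpr hk'⟩
  have base : Lrec 1 (x / R) < Yrec 1 (k : ℝ) := by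
    rw [Lrec_one]
    exact one_div_lt_one_div_of_lt (by linarith) (by linarith)
  refine ⟨base, fun m hm => ?_⟩
  obtain ⟨n, rfl⟩ := Nat.exists_eq_add_of_le' (Nat.one_le_of_lt hm)
  rw [Lrec_succ, Yrec_succ]
  exact strictMonoOn_Lrec n (one_div_one_sub_log_mem_Ioc hxR_mem) hY_mem base
end

section
/- Define, for real x < 0, 𝒴₁(x) = 1/(−x) and recursively 𝒴_m(x) = 1/(1 − ln(𝒴_{m−1}(x))) for m ≥ 2. Then for every integer k ≤ −1 and every integer m ≥ 2: 𝒴_m(k) − 𝒴_m(k−1) ≥ (𝒴₁(k)·𝒴₂(k)⋯𝒴_{m−1}(k)·𝒴_m(k)²) / 2^{m+1}. -/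
/-!
Write `𝒴_{m+1} = φ(𝒴_m)` with `φ(y) = 1/(1 - log y)`, so that
`φ(a) - φ(b) = (log a - log b) φ(a) φ(b)` and `log a - log b ≥ (a - b)/a`.
For `x ≤ -1` every `𝒴_m(x)` lies in `(0, 1]` and `𝒴_m(x - 1) ≤ 𝒴_m(x) ≤ 2 𝒴_m(x - 1)`
(the factor `2` survives `φ` because `log 2 ≤ 1`), so the difference
`𝒴_m(x) - 𝒴_m(x - 1)` gains a factor `𝒴_{m+1}(x)²/(2 𝒴_m(x))` at each step,
starting from `1/(-x) - 1/(1 - x) ≥ 𝒴₁(x)²/4`.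
-/

open Real

noncomputable def logRecip (y : ℝ) : ℝ := 1 / (1 - log y)

lemma Yrec_one (x : ℝ) : Yrec 1 x = 1 / (-x) := rfl

lemma Yrec_add_two (m : ℕ) (x : ℝ) : Yrec (m + 2) x = logRecip (Yrec (m + 1) x) := rfl

section logRecip

variable {a b : ℝ}

lemma one_sub_log_pos (ha : 0 ≤ a) (ha1 : a ≤ 1) : 0 < 1 - log a := by
  linarith [log_nonpos ha ha1]

lemma logRecip_pos (ha : 0 ≤ a) (ha1 : a ≤ 1) : 0 < logRecip a :=
  one_div_pos.mpr (one_sub_log_pos ha ha1)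

lemma logRecip_le_one (ha : 0 ≤ a) (ha1 : a ≤ 1) : logRecip a ≤ 1 := by
  rw [logRecip, div_le_one (one_sub_log_pos ha ha1)]
  linarith [log_nonpos ha ha1]

lemma logRecip_le_logRecip (hb : 0 < b) (hba : b ≤ a) (ha1 : a ≤ 1) :
    logRecip b ≤ logRecip a := by
  apply one_div_le_one_div_of_le (one_sub_log_pos (hb.le.trans hba) ha1)
  linarith [log_le_log hb hba]

lemma logRecip_le_two_mul (ha : 0 < a) (ha1 : a ≤ 1) (hb : 0 < b) (hb1 : b ≤ 1)
    (hab : a ≤ 2 * b) : logRecip a ≤ 2 * logRecip b := by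
  have hlog : log a ≤ log 2 + log b := by
    rw [← log_mul two_ne_zero hb.ne']
    exact log_le_log ha hab
  rw [logRecip, logRecip, mul_one_div,
    div_le_div_iff₀ (one_sub_log_pos ha.le ha1) (one_sub_log_pos hb.le hb1)]
  linarith [log_nonpos ha.le ha1, log_le_sub_one_of_pos two_pos]

lemma logRecip_sub_logRecip (ha : 0 < a) (ha1 : a ≤ 1) (hb : 0 < b) (hb1 : b ≤ 1) :
    logRecip a - logRecip b = (log a - log b) * logRecip a * logRecip b := by
  have := (one_sub_log_pos ha.le ha1).ne'
  have := (one_sub_log_pos hb.le hb1).ne'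
  simp only [logRecip]
  field_simp
  ring

lemma sub_div_le_log_sub_log (ha : 0 < a) (hb : 0 < b) : (a - b) / a ≤ log a - log b := by
  have h := one_sub_inv_le_log_of_pos (div_pos ha hb)
  rw [log_div ha.ne' hb.ne', inv_div] at h
  rwa [sub_div, div_self ha.ne']

end logRecip

section Yrec

variable {x : ℝ}

lemma Yrec_pos_and_le_one (hx : x ≤ -1) (m : ℕ) : 0 < Yrec (m + 1) x ∧ Yrec (m + 1) x ≤ 1 := by
  induction m with
  | zero =>
    rw [Yrec_one, one_div_pos, div_le_one (by linarith)]
    constructor <;> linarith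
  | succ n ih =>
    rw [Yrec_add_two]
    exact ⟨logRecip_pos ih.1.le ih.2, logRecip_le_one ih.1.le ih.2⟩

lemma Yrec_sub_one_le_and_le_two_mul (hx : x ≤ -1) (m : ℕ) :
    Yrec (m + 1) (x - 1) ≤ Yrec (m + 1) x ∧ Yrec (m + 1) x ≤ 2 * Yrec (m + 1) (x - 1) := by
  induction m with
  | zero =>
    rw [Yrec_one, Yrec_one, mul_one_div, div_le_div_iff₀ (by linarith) (by linarith),
      div_le_div_iff₀ (by linarith) (by linarith)]
    constructor <;> linarith
  | succ n ih =>
    obtain ⟨ha, ha1⟩ := Yrec_pos_and_le_one hx n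
    obtain ⟨hb, hb1⟩ := Yrec_pos_and_le_one (by linarith : x - 1 ≤ -1) n
    rw [Yrec_add_two, Yrec_add_two]
    exact ⟨logRecip_le_logRecip hb ih.1 ha1, logRecip_le_two_mul ha ha1 hb hb1 ih.2⟩

lemma prod_Yrec_pos (hx : x ≤ -1) (m : ℕ) : 0 < ∏ i ∈ Finset.Icc 1 m, Yrec i x := by
  refine Finset.prod_pos fun i hi => ?_
  obtain ⟨j, rfl⟩ : ∃ j, i = j + 1 := ⟨i - 1, by grind⟩
  exact (Yrec_pos_and_le_one hx j).1

lemma Yrec_one_sq_div_two_sq_le (hx : x ≤ -1) :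
    Yrec 1 x ^ 2 / 2 ^ 2 ≤ Yrec 1 x - Yrec 1 (x - 1) := by
  have h : Yrec 1 x - Yrec 1 (x - 1) = 1 / (x * (x - 1)) := by
    have : x ≠ 0 := by linarith
    have : x - 1 ≠ 0 := by linarith
    rw [Yrec_one, Yrec_one]
    field_simp
    ring
  rw [h, Yrec_one, div_pow, div_div, div_le_div_iff₀ (by nlinarith) (by nlinarith)]
  nlinarith

lemma prod_mul_Yrec_sq_le_Yrec_sub_Yrec (hx : x ≤ -1) (m : ℕ) :
    (∏ i ∈ Finset.Icc 1 m, Yrec i x) * Yrec (m + 1) x ^ 2 / 2 ^ (m + 2) ≤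
      Yrec (m + 1) x - Yrec (m + 1) (x - 1) := by
  induction m with
  | zero => simpa using Yrec_one_sq_div_two_sq_le hx
  | succ n ih =>
    obtain ⟨ha, ha1⟩ := Yrec_pos_and_le_one hx n
    obtain ⟨hb, hb1⟩ := Yrec_pos_and_le_one (by linarith : x - 1 ≤ -1) n
    have hP := (Yrec_pos_and_le_one hx (n + 1)).1
    have hQ := (Yrec_sub_one_le_and_le_two_mul hx (n + 1)).2
    have hC := prod_Yrec_pos hx n
    simp only [Yrec_add_two] at hP hQ
    rw [Finset.prod_Icc_succ_top (by omega), Yrec_add_two, Yrec_add_two,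
      logRecip_sub_logRecip ha ha1 hb hb1]
    set A := Yrec (n + 1) x
    set B := Yrec (n + 1) (x - 1)
    set C := ∏ i ∈ Finset.Icc 1 n, Yrec i x
    have hlog : C * A / 2 ^ (n + 2) ≤ log A - log B :=
      calc C * A / 2 ^ (n + 2) = C * A ^ 2 / 2 ^ (n + 2) / A := by field_simp
        _ ≤ (A - B) / A := by gcongr
        _ ≤ log A - log B := sub_div_le_log_sub_log ha hb
    calc C * A * logRecip A ^ 2 / 2 ^ (n + 1 + 2)
        = C * A / 2 ^ (n + 2) * logRecip A * (logRecip A / 2) := by ring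
      _ ≤ (log A - log B) * logRecip A * logRecip B := by
        have hlog_nonneg : 0 ≤ log A - log B := le_trans (by positivity) hlog
        gcongr
        linarith

end Yrec

theorem Yrec_diff_lower_bound (k : ℤ) (hk : k ≤ -1) (m : ℕ) (hm : 2 ≤ m) :
    Yrec m (k : ℝ) - Yrec m ((k : ℝ) - 1) ≥
      (∏ i ∈ Finset.Icc 1 (m - 1), Yrec i (k : ℝ)) * Yrec m (k : ℝ) ^ 2 / 2 ^ (m + 1) := by
  obtain ⟨n, rfl⟩ : ∃ n, m = n + 1 := ⟨m - 1, by omega⟩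
  simpa using prod_mul_Yrec_sq_le_Yrec_sub_Yrec (by exact_mod_cast hk : (k : ℝ) ≤ -1) n
end

section
/- There exists a constant C > 0 such that for every D > 0, every R > D, every integer m ≥ 2 and every u ∈ C¹((0,2D)) ∩ L¹((0,2D)) with ∫_0^{2D} |u′(x)| dx < ∞: ∫_0^{2D} (|u(x) − (u)_{(0,2D)}| / δ(x)) · ℒ₁(δ(x)/R) ⋯ ℒ_{m−1}(δ(x)/R) · ℒ_m(δ(x)/R)² dx ≤ C·2^m·∫_0^{2D} |u′(x)| dx, where δ(x) = min{x, 2D−x} and (u)_{(0,2D)} = (1/(2D))∫_0^{2D} u(y) dy. -/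
open MeasureTheory Real

/-!
For `0 < x < R` the weight is an exact derivative,
`d/dx ℒ_m(x/R) = ℒ₁(x/R) ⋯ ℒ_{m-1}(x/R) ℒ_m(x/R)² / x`, and `ℒ_m(t) → 0` as `t → 0⁺`;
hence it integrates over `(0, D)` to `ℒ_m(D/R) < 1`, and, composed with the distance `δ` to the
boundary, over `(0, 2D)` to less than `2`. On the other hand `|u(x) − (u)_{(0,2D)}|` is at most the
oscillation of `u`, which is at most `∫ |u′|`. So the inequality holds with `C = 1`.
-/

open Set Filter Topology

namespace Lrec

theorem mem_Ioo (k : ℕ) {t : ℝ} (ht : t ∈ Ioo (0 : ℝ) 1) : Lrec k t ∈ Ioo (0 : ℝ) 1 := by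
  induction k with
  | zero => exact ht
  | succ k ih =>
    have hlog : Real.log (Lrec k t) < 0 := Real.log_neg ih.1 ih.2
    rw [Lrec, Set.mem_Ioo, one_div, inv_pos, inv_lt_one₀ (by linarith)]
    constructor <;> linarith

theorem hasDerivAt_succ_of_hasDerivAt (k : ℕ) {t d : ℝ} (ht : t ∈ Ioo (0 : ℝ) 1)
    (h : HasDerivAt (Lrec k) d t) :
    HasDerivAt (Lrec (k + 1)) (d / Lrec k t * Lrec (k + 1) t ^ 2) t := by
  obtain ⟨hpos, hlt⟩ := mem_Ioo k ht
  have hden : 1 - Real.log (Lrec k t) ≠ 0 := by linarith [Real.log_neg hpos hlt]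
  have hfun : Lrec (k + 1) = (fun s => 1 - Real.log (Lrec k s))⁻¹ :=
    funext fun s => one_div _
  rw [hfun]
  refine (((h.log hpos.ne').const_sub 1).inv hden).congr_deriv ?_
  simp only [Pi.inv_apply]
  field_simp

theorem hasDerivAt_succ (k : ℕ) {t : ℝ} (ht : t ∈ Ioo (0 : ℝ) 1) :
    HasDerivAt (Lrec (k + 1))
      (t⁻¹ * (∏ i ∈ Finset.Icc 1 k, Lrec i t) * Lrec (k + 1) t ^ 2) t := by
  induction k with
  | zero =>
    convert hasDerivAt_succ_of_hasDerivAt 0 ht (hasDerivAt_id t) using 1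
    simp [Lrec, div_eq_inv_mul]
  | succ k ih =>
    convert hasDerivAt_succ_of_hasDerivAt (k + 1) ht ih using 1
    rw [Finset.prod_Icc_succ_top (by omega)]
    field_simp [(mem_Ioo (k + 1) ht).1.ne']

theorem tendsto_nhdsGT_zero (k : ℕ) : Tendsto (Lrec k) (𝓝[>] 0) (𝓝[>] 0) := by
  induction k with
  | zero => exact tendsto_id
  | succ k ih =>
    have hden : Tendsto (fun t => 1 - Real.log (Lrec k t)) (𝓝[>] 0) atTop :=
      tendsto_atTop_add_const_left _ 1
        (tendsto_neg_atTop_iff.mpr (Real.tendsto_log_nhdsGT_zero.comp ih))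
    simpa [Lrec, Function.comp_def] using tendsto_inv_atTop_nhdsGT_zero.comp hden

end Lrec

theorem integrableOn_Ioc_deriv_of_nonneg_of_tendsto {g g' : ℝ → ℝ} {a b ga : ℝ}
    (hderiv : ∀ x ∈ Ioc a b, HasDerivAt g (g' x) x) (hpos : ∀ x ∈ Ioo a b, 0 ≤ g' x)
    (ha : Tendsto g (𝓝[>] a) (𝓝 ga)) : IntegrableOn g' (Ioc a b) := by
  refine intervalIntegral.integrableOn_deriv_of_nonneg (g := Function.update g a ga) ?_
    (fun x hx => (hderiv x (Ioo_subset_Ioc_self hx)).congr_of_eventuallyEq ?_) hpos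
  · rw [continuousOn_update_iff, Icc_sdiff_left]
    refine ⟨fun x hx => (hderiv x hx).continuousAt.continuousWithinAt, fun _ => ?_⟩
    exact ha.mono_left (nhdsWithin_mono _ Ioc_subset_Ioi_self)
  · filter_upwards [Ioi_mem_nhds hx.1] with y hy using Function.update_of_ne hy.ne' _ _

theorem div_mem_Ioo_zero_one {x R : ℝ} (hx : x ∈ Ioo 0 R) : x / R ∈ Ioo (0 : ℝ) 1 :=
  have hR : 0 < R := hx.1.trans hx.2
  ⟨div_pos hx.1 hR, (div_lt_one hR).mpr hx.2⟩

/-- `hardyWeight R (m - 1) δ` is the weight `ℒ₁ ⋯ ℒ_{m-1} ℒ_m² / δ`, evaluated at `δ / R`. -/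
noncomputable def hardyWeight (R : ℝ) (k : ℕ) (x : ℝ) : ℝ :=
  x⁻¹ * (∏ i ∈ Finset.Icc 1 k, Lrec i (x / R)) * Lrec (k + 1) (x / R) ^ 2

section hardyWeight

variable {R x : ℝ} (k : ℕ)

theorem hasDerivAt_Lrec_succ_div (hx : x ∈ Ioo 0 R) :
    HasDerivAt (fun y => Lrec (k + 1) (y / R)) (hardyWeight R k x) x := by
  refine ((Lrec.hasDerivAt_succ k (div_mem_Ioo_zero_one hx)).comp x
    ((hasDerivAt_id x).div_const R)).congr_deriv ?_
  simp only [hardyWeight]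
  field_simp [(hx.1.trans hx.2).ne']

theorem hardyWeight_nonneg (hx : x ∈ Ioo 0 R) : 0 ≤ hardyWeight R k x := by
  have hx0 : 0 < x := hx.1
  have hprod : 0 < ∏ i ∈ Finset.Icc 1 k, Lrec i (x / R) :=
    Finset.prod_pos fun i _ => (Lrec.mem_Ioo i (div_mem_Ioo_zero_one hx)).1
  unfold hardyWeight
  positivity

theorem tendsto_Lrec_div_nhdsGT_zero (hR : 0 < R) :
    Tendsto (fun y => Lrec k (y / R)) (𝓝[>] 0) (𝓝 0) := by
  have hdiv : Tendsto (· / R) (𝓝[>] (0 : ℝ)) (𝓝[>] 0) := by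
    refine tendsto_nhdsWithin_iff.mpr ⟨?_, ?_⟩
    · simpa using ((continuous_id.div_const R).tendsto 0).mono_left nhdsWithin_le_nhds
    · filter_upwards [self_mem_nhdsWithin] with y hy using div_pos hy hR
  exact ((Lrec.tendsto_nhdsGT_zero k).comp hdiv).mono_right nhdsWithin_le_nhds

variable {D : ℝ}

theorem intervalIntegrable_hardyWeight (hD : 0 < D) (hDR : D < R) :
    IntervalIntegrable (hardyWeight R k) volume 0 D :=
  (intervalIntegrable_iff_integrableOn_Ioc_of_le hD.le).mpr
    (integrableOn_Ioc_deriv_of_nonneg_of_tendsto (g := fun y => Lrec (k + 1) (y / R))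
      (fun _ hx => hasDerivAt_Lrec_succ_div k ⟨hx.1, hx.2.trans_lt hDR⟩)
      (fun _ hx => hardyWeight_nonneg k ⟨hx.1, hx.2.trans hDR⟩)
      (tendsto_Lrec_div_nhdsGT_zero (k + 1) (hD.trans hDR)))

theorem integral_hardyWeight (hD : 0 < D) (hDR : D < R) :
    ∫ x in 0..D, hardyWeight R k x = Lrec (k + 1) (D / R) := by
  have := intervalIntegral.integral_eq_sub_of_hasDerivAt_of_tendsto hD
    (fun x hx => hasDerivAt_Lrec_succ_div k ⟨hx.1, hx.2.trans hDR⟩)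
    (intervalIntegrable_hardyWeight k hD hDR)
    (tendsto_Lrec_div_nhdsGT_zero (k + 1) (hD.trans hDR))
    ((hasDerivAt_Lrec_succ_div k ⟨hD, hDR⟩).continuousAt.tendsto.mono_left nhdsWithin_le_nhds)
  rwa [sub_zero] at this

end hardyWeight

section distanceToBoundary

variable {W : ℝ → ℝ} {D : ℝ}

theorem min_sub_mem_Ioo {x R : ℝ} (hx : x ∈ Ioo 0 (2 * D)) (hDR : D < R) :
    min x (2 * D - x) ∈ Ioo 0 R :=
  ⟨lt_min hx.1 (by linarith [hx.2]),
    (min_le_iff.mpr ((le_total x D).imp_right fun h => by linarith)).trans_lt hDR⟩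

theorem eqOn_comp_min_sub_left (hD : 0 ≤ D) :
    EqOn (fun x => W (min x (2 * D - x))) W (uIcc 0 D) := by
  intro x hx
  rw [uIcc_of_le hD] at hx
  simp only [min_eq_left (by linarith [hx.2] : x ≤ 2 * D - x)]

theorem eqOn_comp_min_sub_right (hD : 0 ≤ D) :
    EqOn (fun x => W (min x (2 * D - x))) (fun x => W (2 * D - x)) (uIcc D (2 * D)) := by
  intro x hx
  rw [uIcc_of_le (by linarith)] at hx
  simp only [min_eq_right (by linarith [hx.1] : 2 * D - x ≤ x)]

theorem IntervalIntegrable.comp_min_sub (hD : 0 ≤ D) (hW : IntervalIntegrable W volume 0 D) :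
    IntervalIntegrable (fun x => W (min x (2 * D - x))) volume 0 (2 * D) := by
  have hW' : IntervalIntegrable (fun x => W (2 * D - x)) volume D (2 * D) := by
    simpa [two_mul] using (hW.comp_sub_left (2 * D)).symm
  exact (hW.congr fun x hx => (eqOn_comp_min_sub_left hD (uIoc_subset_uIcc hx)).symm).trans
    (hW'.congr fun x hx => (eqOn_comp_min_sub_right hD (uIoc_subset_uIcc hx)).symm)

theorem intervalIntegral.integral_comp_min_sub (hD : 0 ≤ D)
    (hW : IntervalIntegrable W volume 0 D) :
    ∫ x in 0..2 * D, W (min x (2 * D - x)) = 2 * ∫ x in 0..D, W x := by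
  have hW' := hW.comp_min_sub hD
  have hmid : D ∈ uIcc 0 (2 * D) := by rw [uIcc_of_le (by linarith)]; constructor <;> linarith
  rw [← intervalIntegral.integral_add_adjacent_intervals (b := D)
      (hW'.mono_set (uIcc_subset_uIcc_left hmid)) (hW'.mono_set (uIcc_subset_uIcc_right hmid)),
    intervalIntegral.integral_congr (eqOn_comp_min_sub_left hD),
    intervalIntegral.integral_congr (eqOn_comp_min_sub_right hD),
    intervalIntegral.integral_comp_sub_left]
  simp only [sub_self, two_mul, add_sub_cancel_right]

end distanceToBoundary

theorem dist_setAverage_le {α E : Type*} [MeasurableSpace α] [NormedAddCommGroup E]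
    [NormedSpace ℝ E] [CompleteSpace E] {μ : Measure α} {s : Set α} {f : α → E} {c : E} {V : ℝ}
    (hs : MeasurableSet s) (h0 : μ s ≠ 0) (hfin : μ s ≠ ⊤) (hf : IntegrableOn f s μ)
    (hV : ∀ y ∈ s, dist (f y) c ≤ V) : dist (⨍ y in s, f y ∂μ) c ≤ V :=
  (convex_closedBall c V).set_average_mem Metric.isClosed_closedBall h0 hfin
    (ae_restrict_of_forall_mem hs hV) hf

theorem integrableOn_derivWithin_Ioo {u : ℝ → ℝ} {a b : ℝ}
    (hu' : IntegrableOn (fun z => |derivWithin u (Ioo a b) z|) (Ioo a b)) :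
    IntegrableOn (derivWithin u (Ioo a b)) (Ioo a b) :=
  hu'.mono' ((measurable_deriv u).aestronglyMeasurable.congr
    (ae_restrict_of_forall_mem measurableSet_Ioo fun _ hz =>
      (derivWithin_of_isOpen isOpen_Ioo hz).symm))
    (Eventually.of_forall fun _ => (Real.norm_eq_abs _).le)

theorem abs_sub_le_integral_abs_derivWithin {u : ℝ → ℝ} {a b x y : ℝ}
    (hu : DifferentiableOn ℝ u (Ioo a b))
    (hu' : IntegrableOn (fun z => |derivWithin u (Ioo a b) z|) (Ioo a b))
    (hx : x ∈ Ioo a b) (hy : y ∈ Ioo a b) :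
    |u y - u x| ≤ ∫ z in Ioo a b, |derivWithin u (Ioo a b) z| := by
  wlog hxy : x ≤ y generalizing x y
  · rw [abs_sub_comm]; exact this hy hx (le_of_not_ge hxy)
  have hsub : Icc x y ⊆ Ioo a b := Icc_subset_Ioo hx.1 hy.2
  have hderiv : ∀ z ∈ Ioo a b, HasDerivAt u (derivWithin u (Ioo a b) z) z := fun z hz =>
    (hu.differentiableAt (isOpen_Ioo.mem_nhds hz)).hasDerivAt.congr_deriv
      (derivWithin_of_isOpen isOpen_Ioo hz).symm
  have hftc : ∫ z in x..y, derivWithin u (Ioo a b) z = u y - u x :=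
    intervalIntegral.integral_eq_sub_of_hasDerivAt
      (fun z hz => hderiv z (hsub (uIcc_of_le hxy ▸ hz)))
      ((intervalIntegrable_iff_integrableOn_Icc_of_le hxy).mpr
        ((integrableOn_derivWithin_Ioo hu').mono_set hsub))
  calc |u y - u x| ≤ ∫ z in x..y, |derivWithin u (Ioo a b) z| :=
        hftc ▸ intervalIntegral.abs_integral_le_integral_abs hxy
    _ = ∫ z in Ioc x y, |derivWithin u (Ioo a b) z| := intervalIntegral.integral_of_le hxy
    _ ≤ ∫ z in Ioo a b, |derivWithin u (Ioo a b) z| :=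
        setIntegral_mono_set hu' (Eventually.of_forall fun _ => abs_nonneg _)
          (Eventually.of_forall (Ioc_subset_Icc_self.trans hsub))

theorem abs_sub_setAverage_le_integral_abs_derivWithin {u : ℝ → ℝ} {a b x : ℝ} (hab : a < b)
    (hu : DifferentiableOn ℝ u (Ioo a b)) (hui : IntegrableOn u (Ioo a b))
    (hu' : IntegrableOn (fun z => |derivWithin u (Ioo a b) z|) (Ioo a b)) (hx : x ∈ Ioo a b) :
    |u x - ⨍ y in Ioo a b, u y| ≤ ∫ z in Ioo a b, |derivWithin u (Ioo a b) z| := by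
  rw [abs_sub_comm, ← Real.dist_eq]
  refine dist_setAverage_le measurableSet_Ioo (by simp [hab]) (by simp) hui fun y hy => ?_
  rw [Real.dist_eq]
  exact abs_sub_le_integral_abs_derivWithin hu hu' hx hy

section hardyWeightDistance

variable {D R : ℝ} (k : ℕ)

theorem integrableOn_hardyWeight_min (hD : 0 < D) (hDR : D < R) :
    IntegrableOn (fun x => hardyWeight R k (min x (2 * D - x))) (Ioo 0 (2 * D)) :=
  (intervalIntegrable_iff_integrableOn_Ioo_of_le (by linarith)).mp
    ((intervalIntegrable_hardyWeight k hD hDR).comp_min_sub hD.le)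

theorem integral_hardyWeight_min (hD : 0 < D) (hDR : D < R) :
    ∫ x in Ioo 0 (2 * D), hardyWeight R k (min x (2 * D - x)) = 2 * Lrec (k + 1) (D / R) := by
  rw [← integral_Ioc_eq_integral_Ioo, ← intervalIntegral.integral_of_le (by linarith),
    intervalIntegral.integral_comp_min_sub hD.le (intervalIntegrable_hardyWeight k hD hDR),
    integral_hardyWeight k hD hDR]

end hardyWeightDistance

theorem hardy_W11_interval_general :
    ∃ C > (0 : ℝ), ∀ D : ℝ, 0 < D → ∀ R : ℝ, D < R → ∀ m : ℕ, 2 ≤ m →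
      ∀ u : ℝ → ℝ,
        ContDiffOn ℝ 1 u (Set.Ioo (0 : ℝ) (2 * D)) →
        IntegrableOn u (Set.Ioo (0 : ℝ) (2 * D)) volume →
        IntegrableOn (fun x => |derivWithin u (Set.Ioo (0 : ℝ) (2 * D)) x|)
          (Set.Ioo (0 : ℝ) (2 * D)) volume →
        (∫ x in Set.Ioo (0 : ℝ) (2 * D),
            |u x - ⨍ y in Set.Ioo (0 : ℝ) (2 * D), u y| / min x (2 * D - x) *
              ((∏ i ∈ Finset.Icc 1 (m - 1), Lrec i (min x (2 * D - x) / R)) *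
                Lrec m (min x (2 * D - x) / R) ^ 2)) ≤
          C * 2 ^ m *
            ∫ x in Set.Ioo (0 : ℝ) (2 * D), |derivWithin u (Set.Ioo (0 : ℝ) (2 * D)) x| := by
  refine ⟨1, one_pos, fun D hD R hR m hm u hu hui hu' => ?_⟩
  obtain ⟨k, rfl⟩ : ∃ k, m = k + 1 := ⟨m - 1, by omega⟩
  set s := Ioo (0 : ℝ) (2 * D)
  set V := ∫ x in s, |derivWithin u s x|
  have hosc : ∀ x ∈ s, |u x - ⨍ y in s, u y| ≤ V := fun x hx =>
    abs_sub_setAverage_le_integral_abs_derivWithin (by linarith)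
      (hu.differentiableOn one_ne_zero) hui hu' hx
  have hL : Lrec (k + 1) (D / R) ∈ Ioo 0 1 :=
    Lrec.mem_Ioo (k + 1) (div_mem_Ioo_zero_one ⟨hD, hR⟩)
  calc _ = ∫ x in s, |u x - ⨍ y in s, u y| * hardyWeight R k (min x (2 * D - x)) := by
        refine setIntegral_congr_fun measurableSet_Ioo fun x _ => ?_
        simp only [hardyWeight, Nat.add_sub_cancel]
        ring
    _ ≤ ∫ x in s, V * hardyWeight R k (min x (2 * D - x)) :=
        integral_mono_of_nonneg
          (ae_restrict_of_forall_mem measurableSet_Ioo fun x hx =>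
            mul_nonneg (abs_nonneg _) (hardyWeight_nonneg k (min_sub_mem_Ioo hx hR)))
          ((integrableOn_hardyWeight_min k hD hR).const_mul V)
          (ae_restrict_of_forall_mem measurableSet_Ioo fun x hx =>
            mul_le_mul_of_nonneg_right (hosc x hx) (hardyWeight_nonneg k (min_sub_mem_Ioo hx hR)))
    _ = V * (2 * Lrec (k + 1) (D / R)) := by
        rw [integral_const_mul, integral_hardyWeight_min k hD hR]
    _ ≤ 1 * 2 ^ (k + 1) * V := by
        have hV : 0 ≤ V := integral_nonneg fun _ => abs_nonneg _
        have h2 : (2 : ℝ) ≤ 2 ^ (k + 1) := le_self_pow₀ one_le_two (by omega)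
        nlinarith [hL.1, hL.2]
end

section
/- Let d ≥ 2, n ∈ ℕ, Ω_n = (−n,n)^{d−1} × (0,1) ⊂ ℝ^d, and let u′ ∈ C_c^∞((−n,n)^{d−1}) with ∫_{(−n,n)^{d−1}} |u′(x′)| dx′ > 0. Define u(x′, x_d) = u′(x′) on Ω_n. Then for every R > 1 and every integer m ≥ 2: ∫_{Ω_n} (|u(x)|/x_d) · ℒ₁(x_d/R) ⋯ ℒ_{m−1}(x_d/R) · ℒ_m(x_d/R)² dx ≥ (1/((m+1)R²)) · ∫_{(−n,n)^{d−1}} |u′(x′)| dx′. Consequently, for every α ≥ 1 the series ∑_{m=2}^∞ α^m ∫_{Ω_n} (|u(x)|/x_d) · ℒ₁(x_d/R) ⋯ ℒ_{m−1}(x_d/R) · ℒ_m(x_d/R)² dx diverges to +∞. -/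
open MeasureTheory Real Filter

lemma Lrec_step_mem {x : ℝ} (h : x ∈ Set.Ioo (0:ℝ) 1) :
    1 / (1 - Real.log x) ∈ Set.Ioo (0:ℝ) 1 := by
  have hlog : Real.log x < 0 := Real.log_neg h.1 h.2
  have h1 : (1:ℝ) < 1 - Real.log x := by linarith
  constructor
  · positivity
  · rw [div_lt_one (by linarith)]; linarith

lemma Lrec_mem_Ioo {s : ℝ} (h : s ∈ Set.Ioo (0:ℝ) 1) :
    ∀ m : ℕ, 1 ≤ m → Lrec m s ∈ Set.Ioo (0:ℝ) 1 := by
  intro m hm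
  induction m, hm using Nat.le_induction with
  | base => exact Lrec_step_mem h
  | succ m hm ih => exact Lrec_step_mem ih

lemma hasDerivAt_Lrec {s : ℝ} (h : s ∈ Set.Ioo (0:ℝ) 1) :
    ∀ m : ℕ, 1 ≤ m → HasDerivAt (Lrec m)
      ((∏ j ∈ Finset.Icc 1 (m - 1), Lrec j s) * (Lrec m s) ^ 2 / s) s := by
  intro m hm
  induction m, hm using Nat.le_induction with
  | base =>
    have hlog : Real.log s < 0 := Real.log_neg h.1 h.2
    have hne : (1 : ℝ) - Real.log s ≠ 0 := by linarith
    have h1 : HasDerivAt (fun t => 1 - Real.log t) (-(s⁻¹)) s :=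
      (Real.hasDerivAt_log h.1.ne').const_sub 1
    have h2 := h1.inv hne
    have : HasDerivAt (Lrec 1) (-(-s⁻¹) / (1 - Real.log s) ^ 2) s := by
      simpa [Lrec, one_div, Pi.inv_def] using h2
    convert this using 1
    simp only [Lrec]
    field_simp
    ring_nf
    simp
  | succ m hm ih =>
    have hmem := Lrec_mem_Ioo h m hm
    have hlog : Real.log (Lrec m s) < 0 := Real.log_neg hmem.1 hmem.2
    have hne : (1 : ℝ) - Real.log (Lrec m s) ≠ 0 := by linarith
    set D := (∏ j ∈ Finset.Icc 1 (m - 1), Lrec j s) * (Lrec m s) ^ 2 / s with hD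
    have h1 : HasDerivAt (fun t => 1 - Real.log (Lrec m t)) (-(D / Lrec m s)) s :=
      ((ih.log hmem.1.ne')).const_sub 1
    have h2 := h1.inv hne
    have h3 : HasDerivAt (Lrec (m+1)) (-(-(D / Lrec m s)) / (1 - Real.log (Lrec m s)) ^ 2) s := by
      simpa [Lrec, one_div, Pi.inv_def] using h2
    convert h3 using 1
    have hprod : ∏ j ∈ Finset.Icc 1 (m + 1 - 1), Lrec j s
        = (∏ j ∈ Finset.Icc 1 (m - 1), Lrec j s) * Lrec m s := by
      have : m + 1 - 1 = (m - 1) + 1 := by omega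
      rw [this, Finset.prod_Icc_succ_top (by omega)]
      congr 2
      omega
    rw [hprod]
    have hLm1 : Lrec (m+1) s = 1 / (1 - Real.log (Lrec m s)) := rfl
    have hms : Lrec m s ≠ 0 := hmem.1.ne'
    have hs : s ≠ 0 := h.1.ne'
    have hDL : D / Lrec m s = (∏ j ∈ Finset.Icc 1 (m - 1), Lrec j s) * Lrec m s / s := by
      rw [hD]; field_simp
    rw [neg_neg, hDL, hLm1]
    rw [div_pow, one_pow, mul_one_div, div_div, div_div, mul_comm ((1 - Real.log (Lrec m s)) ^ 2) s]

lemma tendsto_Lrec_zero : ∀ m : ℕ, 1 ≤ m →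
    Tendsto (Lrec m) (nhdsWithin 0 (Set.Ioi 0)) (nhdsWithin 0 (Set.Ioi 0)) := by
  have base : Tendsto (Lrec 1) (nhdsWithin 0 (Set.Ioi 0)) (nhdsWithin 0 (Set.Ioi 0)) := by
    rw [tendsto_nhdsWithin_iff]
    constructor
    · have h1 : Tendsto (fun t : ℝ => 1 - Real.log t) (nhdsWithin 0 (Set.Ioi 0)) atTop := by
        have := Real.tendsto_log_nhdsGT_zero
        have h2 : Tendsto (fun t : ℝ => -Real.log t) (nhdsWithin 0 (Set.Ioi 0)) atTop :=
          tendsto_neg_atTop_iff.mpr this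
        have h3 := tendsto_atTop_add_const_right (nhdsWithin 0 (Set.Ioi 0)) 1 h2
        refine h3.congr fun t => by ring
      have h4 := h1.inv_tendsto_atTop
      refine h4.congr fun t => ?_
      simp [Lrec, one_div]
    · filter_upwards [Ioo_mem_nhdsGT_of_mem (Set.mem_Ico.mpr ⟨le_refl _, zero_lt_one⟩)]
        with t ht
      exact (Lrec_mem_Ioo ht 1 le_rfl).1
  intro m hm
  induction m, hm using Nat.le_induction with
  | base => exact base
  | succ m hm ih => exact base.comp ih

lemma Lrec_ge {R : ℝ} (hR : 1 < R) : ∀ m : ℕ, 1 ≤ m →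
    1 / ((m : ℝ) + Real.log R) ≤ Lrec m (1 / R) := by
  have hlogR : 0 < Real.log R := Real.log_pos hR
  have hmem0 : (1 : ℝ) / R ∈ Set.Ioo (0:ℝ) 1 := by
    constructor
    · positivity
    · rw [div_lt_one (by linarith)]; linarith
  intro m hm
  induction m, hm using Nat.le_induction with
  | base =>
    have : Lrec 1 (1 / R) = 1 / (1 + Real.log R) := by
      simp only [Lrec, Real.log_div one_ne_zero (by positivity : R ≠ 0), Real.log_one]
      ring_nf
    rw [this]
    norm_num
  | succ m hm ih =>
    have hmem := Lrec_mem_Ioo hmem0 m hm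
    have hpos : (0:ℝ) < (m : ℝ) + Real.log R := by positivity
    have hlog1 : Real.log (1 / ((m : ℝ) + Real.log R)) ≤ Real.log (Lrec m (1 / R)) :=
      Real.log_le_log (by positivity) ih
    have hlog2 : Real.log (1 / ((m : ℝ) + Real.log R)) = -Real.log ((m : ℝ) + Real.log R) := by
      rw [one_div, Real.log_inv]
    have hlog3 : Real.log ((m : ℝ) + Real.log R) ≤ (m : ℝ) + Real.log R - 1 :=
      Real.log_le_sub_one_of_pos hpos
    have hLpos : 0 < 1 - Real.log (Lrec m (1 / R)) := by
      have := Real.log_neg hmem.1 hmem.2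
      linarith
    have hle : 1 - Real.log (Lrec m (1 / R)) ≤ ((m : ℕ) + 1 : ℝ) + Real.log R := by
      push_cast
      linarith
    have : Lrec (m + 1) (1 / R) = 1 / (1 - Real.log (Lrec m (1 / R))) := rfl
    rw [this]
    rw [div_le_div_iff₀ (by push_cast; linarith) hLpos]
    push_cast at hle ⊢
    linarith

lemma Lrec_ge' {R : ℝ} (hR : 1 < R) {m : ℕ} (hm : 1 ≤ m) :
    1 / (((m : ℝ) + 1) * R ^ 2) ≤ Lrec m (1 / R) := by
  refine le_trans ?_ (Lrec_ge hR m hm)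
  have hlogR : 0 < Real.log R := Real.log_pos hR
  have hlog : Real.log R ≤ R - 1 := Real.log_le_sub_one_of_pos (by linarith)
  have hm1 : (1:ℝ) ≤ (m:ℝ) := by exact_mod_cast hm
  apply one_div_le_one_div_of_le (by positivity)
  nlinarith [sq_nonneg R, sq_nonneg (R - 1)]

lemma mem_Ioo_div {R t : ℝ} (hR : 1 < R) (ht : 0 < t) (ht1 : t ≤ 1) :
    t / R ∈ Set.Ioo (0:ℝ) 1 := by
  constructor
  · positivity
  · rw [div_lt_one (by linarith)]; linarith

lemma g_nonneg {R : ℝ} (hR : 1 < R) {m : ℕ} (hm : 1 ≤ m) {t : ℝ} (ht : t ∈ Set.Ioo (0:ℝ) 1) :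
    0 ≤ 1 / t * ((∏ i ∈ Finset.Icc 1 (m - 1), Lrec i (t / R)) * Lrec m (t / R) ^ 2) := by
  have hmem := mem_Ioo_div hR ht.1 ht.2.le
  have hprod : 0 < ∏ i ∈ Finset.Icc 1 (m - 1), Lrec i (t / R) := by
    apply Finset.prod_pos
    intro i hi
    exact (Lrec_mem_Ioo hmem i (Finset.mem_Icc.mp hi).1).1
  have h1 : 0 < t := ht.1
  positivity

lemma hasDerivAt_G {R : ℝ} (hR : 1 < R) {m : ℕ} (hm : 1 ≤ m) {t : ℝ}
    (ht : 0 < t) (ht1 : t ≤ 1) :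
    HasDerivAt (fun s => Lrec m (s / R))
      (1 / t * ((∏ i ∈ Finset.Icc 1 (m - 1), Lrec i (t / R)) * Lrec m (t / R) ^ 2)) t := by
  have hmem := mem_Ioo_div hR ht ht1
  have h1 := (hasDerivAt_Lrec hmem m hm).comp t ((hasDerivAt_id t).div_const R)
  refine HasDerivAt.congr_deriv h1 ?_
  have hRne : R ≠ 0 := by linarith
  have htne : t ≠ 0 := ht.ne'
  field_simp

lemma integral_g {R : ℝ} (hR : 1 < R) {m : ℕ} (hm : 1 ≤ m) :
    IntegrableOn (fun t => 1 / t *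
        ((∏ i ∈ Finset.Icc 1 (m - 1), Lrec i (t / R)) * Lrec m (t / R) ^ 2))
      (Set.Ioo (0:ℝ) 1) ∧
    ∫ t in Set.Ioo (0:ℝ) 1, (1 / t *
        ((∏ i ∈ Finset.Icc 1 (m - 1), Lrec i (t / R)) * Lrec m (t / R) ^ 2))
      = Lrec m (1 / R) := by
  set g : ℝ → ℝ := fun t => 1 / t *
      ((∏ i ∈ Finset.Icc 1 (m - 1), Lrec i (t / R)) * Lrec m (t / R) ^ 2) with hg
  set G : ℝ → ℝ := fun t => if t = 0 then 0 else Lrec m (t / R) with hG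
  have hderiv : ∀ t ∈ Set.Ioo (0:ℝ) 1, HasDerivAt G (g t) t := by
    intro t ht
    have h1 := hasDerivAt_G hR hm ht.1 ht.2.le
    apply h1.congr_of_eventuallyEq
    filter_upwards [IsOpen.mem_nhds isOpen_Ioi ht.1] with s hs
    simp [hG, (ne_of_gt (Set.mem_Ioi.mp hs))]
  have htend : Tendsto (fun t => Lrec m (t / R)) (nhdsWithin 0 (Set.Ioi 0)) (nhds 0) := by
    have hdiv : Tendsto (fun t : ℝ => t / R) (nhdsWithin 0 (Set.Ioi 0))
        (nhdsWithin 0 (Set.Ioi 0)) := by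
      rw [tendsto_nhdsWithin_iff]
      constructor
      · have := (continuous_id.div_const R).tendsto (0:ℝ)
        simpa using this.mono_left nhdsWithin_le_nhds
      · filter_upwards [self_mem_nhdsWithin] with t ht
        exact div_pos (Set.mem_Ioi.mp ht) (by linarith)
    exact ((tendsto_Lrec_zero m hm).comp hdiv).mono_right nhdsWithin_le_nhds
  have hcont : ContinuousOn G (Set.Icc (0:ℝ) 1) := by
    intro t ht
    rcases eq_or_lt_of_le ht.1 with h0 | h0
    · -- t = 0
      rw [← h0]
      have hsub : nhdsWithin (0:ℝ) (Set.Icc 0 1) ≤ nhdsWithin 0 (Set.Ici 0) :=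
        nhdsWithin_mono _ Set.Icc_subset_Ici_self
      have : Set.Ici (0:ℝ) = {0} ∪ Set.Ioi 0 := by
        ext x; simp [Set.mem_Ici, Set.mem_Ioi, le_iff_lt_or_eq]
      unfold ContinuousWithinAt
      have hG0 : G 0 = 0 := by simp [hG]
      rw [hG0]
      apply Tendsto.mono_left _ hsub
      rw [this, nhdsWithin_union, nhdsWithin_singleton]
      rw [tendsto_sup]
      constructor
      · rw [tendsto_pure_left]
        intro s hs
        rw [hG0]
        exact mem_of_mem_nhds hs
      · refine htend.congr' ?_
        filter_upwards [self_mem_nhdsWithin] with s hs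
        simp [hG, (ne_of_gt (Set.mem_Ioi.mp hs))]
    · -- 0 < t
      have h1 := hasDerivAt_G hR hm h0 ht.2
      have h2 : ContinuousAt (fun s => Lrec m (s / R)) t := h1.continuousAt
      have h3 : ContinuousAt G t := by
        apply h2.congr
        filter_upwards [IsOpen.mem_nhds isOpen_Ioi h0] with s hs
        simp [hG, (ne_of_gt (Set.mem_Ioi.mp hs))]
      exact h3.continuousWithinAt
  have hpos : ∀ t ∈ Set.Ioo (0:ℝ) 1, 0 ≤ g t := fun t ht => g_nonneg hR hm ht
  have hint : IntegrableOn g (Set.Ioc (0:ℝ) 1) :=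
    intervalIntegral.integrableOn_deriv_of_nonneg hcont hderiv hpos
  have hint' : IntegrableOn g (Set.Ioo (0:ℝ) 1) := hint.mono_set Set.Ioo_subset_Ioc_self
  refine ⟨hint', ?_⟩
  have heq : ∫ t in Set.Ioo (0:ℝ) 1, g t = ∫ t in (0:ℝ)..1, g t := by
    rw [intervalIntegral.integral_of_le zero_le_one, integral_Ioc_eq_integral_Ioo]
  rw [heq]
  have hftc := intervalIntegral.integral_eq_sub_of_hasDeriv_right_of_le zero_le_one hcont
    (fun t ht => (hderiv t ht).hasDerivWithinAt)
    (by rw [intervalIntegrable_iff_integrableOn_Ioc_of_le zero_le_one]; exact hint)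
  rw [hftc]
  simp [hG]

lemma hardy_integral_eq (k n : ℕ)
    (Q : Set (EuclideanSpace ℝ (Fin k)))
    (hQ : Q = {y : EuclideanSpace ℝ (Fin k) | ∀ i, y i ∈ Set.Ioo (-(n : ℝ)) (n : ℝ)})
    (Ωn : Set (EuclideanSpace ℝ (Fin (k + 1))))
    (hΩn : Ωn = {x : EuclideanSpace ℝ (Fin (k + 1)) |
      (∀ i : Fin (k + 1), (i : ℕ) < k → x i ∈ Set.Ioo (-(n : ℝ)) (n : ℝ)) ∧
        x (Fin.last k) ∈ Set.Ioo (0 : ℝ) 1})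
    (u' : EuclideanSpace ℝ (Fin k) → ℝ)
    (u : EuclideanSpace ℝ (Fin (k + 1)) → ℝ)
    (hu : ∀ x, u x = u' (WithLp.toLp 2 (fun i => x (Fin.castSucc i))))
    (R : ℝ) (hR : 1 < R) (m : ℕ) (hm : 1 ≤ m) :
    (∫ x in Ωn, |u x| / x (Fin.last k) *
        ((∏ i ∈ Finset.Icc 1 (m - 1), Lrec i (x (Fin.last k) / R)) *
          Lrec m (x (Fin.last k) / R) ^ 2))
      = Lrec m (1 / R) * ∫ y in Q, |u' y| := by
  classical
  set E : EuclideanSpace ℝ (Fin (k + 1)) ≃ᵐ ℝ × (Fin k → ℝ) :=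
    ((MeasurableEquiv.toLp 2 (Fin (k + 1) → ℝ)).symm).trans
      (MeasurableEquiv.piFinSuccAbove (fun _ : Fin (k + 1) => ℝ) (Fin.last k)) with hE
  have hEmp : MeasurePreserving E volume volume :=
    (volume_preserving_piFinSuccAbove (fun _ : Fin (k + 1) => ℝ) (Fin.last k)).comp
      (EuclideanSpace.volume_preserving_symm_measurableEquiv_toLp (Fin (k + 1)))
  have hEapp : ∀ x : EuclideanSpace ℝ (Fin (k + 1)),
      E x = (x (Fin.last k), fun j : Fin k => x (Fin.castSucc j)) := by
    intro x
    simp only [hE, MeasurableEquiv.trans_apply, MeasurableEquiv.piFinSuccAbove_apply]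
    show ((x (Fin.last k), fun j => x ((Fin.last k).succAbove j)) : ℝ × (Fin k → ℝ)) = _
    rw [Fin.succAbove_last]
  set Q' : Set (Fin k → ℝ) := {y : Fin k → ℝ | ∀ i, y i ∈ Set.Ioo (-(n : ℝ)) (n : ℝ)} with hQ'
  set S : Set (ℝ × (Fin k → ℝ)) := (Set.Ioo (0:ℝ) 1) ×ˢ Q' with hS
  set u'' : (Fin k → ℝ) → ℝ :=
    fun y => u' (((MeasurableEquiv.toLp 2 (Fin k → ℝ)).symm).symm y) with hu''
  have hset : Ωn = E ⁻¹' S := by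
    rw [hΩn]
    ext x
    rw [Set.mem_preimage, hEapp x, hS, Set.mem_prod]
    simp only [Set.mem_setOf_eq, hQ']
    constructor
    · rintro ⟨h1, h2⟩
      exact ⟨h2, fun j => h1 (Fin.castSucc j) (by simp [Fin.castSucc])⟩
    · rintro ⟨h2, h1⟩
      refine ⟨fun i hi => ?_, h2⟩
      have := h1 ⟨(i : ℕ), hi⟩
      convert this using 2
      exact Fin.ext rfl
  have hfun : ∀ x : EuclideanSpace ℝ (Fin (k + 1)),
      |u x| / x (Fin.last k) *
        ((∏ i ∈ Finset.Icc 1 (m - 1), Lrec i (x (Fin.last k) / R)) *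
          Lrec m (x (Fin.last k) / R) ^ 2)
      = (fun p : ℝ × (Fin k → ℝ) => (1 / p.1 *
          ((∏ i ∈ Finset.Icc 1 (m - 1), Lrec i (p.1 / R)) * Lrec m (p.1 / R) ^ 2)) * |u'' p.2|)
        (E x) := by
    intro x
    rw [hEapp x]
    simp only [hu'']
    have harg : (((MeasurableEquiv.toLp 2 (Fin k → ℝ)).symm).symm
        (fun j : Fin k => x (Fin.castSucc j))) = WithLp.toLp 2 (fun i : Fin k => x (Fin.castSucc i)) := rfl
    rw [harg, ← hu x]
    ring
  calc ∫ x in Ωn, |u x| / x (Fin.last k) *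
        ((∏ i ∈ Finset.Icc 1 (m - 1), Lrec i (x (Fin.last k) / R)) *
          Lrec m (x (Fin.last k) / R) ^ 2)
      = ∫ x in E ⁻¹' S, (fun p : ℝ × (Fin k → ℝ) => (1 / p.1 *
          ((∏ i ∈ Finset.Icc 1 (m - 1), Lrec i (p.1 / R)) * Lrec m (p.1 / R) ^ 2)) * |u'' p.2|)
          (E x) := by
        rw [← hset]
        congr 1
        funext x
        exact hfun x
    _ = ∫ p in S, (1 / p.1 *
          ((∏ i ∈ Finset.Icc 1 (m - 1), Lrec i (p.1 / R)) * Lrec m (p.1 / R) ^ 2)) * |u'' p.2| :=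
        hEmp.setIntegral_preimage_emb E.measurableEmbedding
          (fun p : ℝ × (Fin k → ℝ) => (1 / p.1 *
            ((∏ i ∈ Finset.Icc 1 (m - 1), Lrec i (p.1 / R)) * Lrec m (p.1 / R) ^ 2)) * |u'' p.2|) S
    _ = (∫ t in Set.Ioo (0:ℝ) 1, 1 / t *
          ((∏ i ∈ Finset.Icc 1 (m - 1), Lrec i (t / R)) * Lrec m (t / R) ^ 2)) *
        ∫ y in Q', |u'' y| := by
        rw [hS, Measure.volume_eq_prod]
        exact setIntegral_prod_mul (μ := (volume : Measure ℝ))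
          (ν := (volume : Measure (Fin k → ℝ)))
          (fun t : ℝ => 1 / t *
            ((∏ i ∈ Finset.Icc 1 (m - 1), Lrec i (t / R)) * Lrec m (t / R) ^ 2))
          (fun y => |u'' y|) (Set.Ioo (0:ℝ) 1) Q'
    _ = Lrec m (1 / R) * ∫ y in Q', |u'' y| := by rw [(integral_g hR hm).2]
    _ = Lrec m (1 / R) * ∫ y in Q, |u' y| := by
        congr 1
        have := (EuclideanSpace.volume_preserving_symm_measurableEquiv_toLp (Fin k)).setIntegral_preimage_emb
          ((MeasurableEquiv.toLp 2 (Fin k → ℝ)).symm).measurableEmbedding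
          (fun y => |u'' y|) Q'
        rw [← this]
        have hpre : ((MeasurableEquiv.toLp 2 (Fin k → ℝ)).symm) ⁻¹' Q' = Q := by
          rw [hQ]
          ext y
          simp only [Set.mem_preimage, Set.mem_setOf_eq, hQ']
          rfl
        rw [hpre]
        congr 1

/-- The counterexample showing the series Hardy inequality fails for `α ≥ 1`:
for `u(x', x_d) = u'(x')` the `m`-th Hardy integral is at least `(1/((m+1)R²))‖u'‖_{L¹}`,
and hence the series `∑_{m≥2} α^m (⋯)` diverges to `+∞` for `α ≥ 1`. -/
theorem hardy_series_fails_for_alpha_ge_one (d : ℕ) (hd : 2 ≤ d) (n : ℕ)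
    (Q : Set (EuclideanSpace ℝ (Fin (d - 1))))
    (hQ : Q = {y : EuclideanSpace ℝ (Fin (d - 1)) | ∀ i, y i ∈ Set.Ioo (-(n : ℝ)) (n : ℝ)})
    (Ωn : Set (EuclideanSpace ℝ (Fin d)))
    (hΩn : Ωn = {x : EuclideanSpace ℝ (Fin d) |
      (∀ i : Fin d, (i : ℕ) < d - 1 → x i ∈ Set.Ioo (-(n : ℝ)) (n : ℝ)) ∧
        x ⟨d - 1, by omega⟩ ∈ Set.Ioo (0 : ℝ) 1})
    (u' : EuclideanSpace ℝ (Fin (d - 1)) → ℝ)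
    (hu'smooth : ContDiff ℝ (⊤ : ℕ∞) u') (hu'supp : HasCompactSupport u')
    (hu'in : tsupport u' ⊆ Q)
    (hu'pos : 0 < ∫ y in Q, |u' y|)
    (u : EuclideanSpace ℝ (Fin d) → ℝ)
    (hu : u = fun x => u' (WithLp.toLp 2 (fun i => x (Fin.castLE (Nat.sub_le d 1) i)))) :
    (∀ R : ℝ, 1 < R → ∀ m : ℕ, 2 ≤ m →
      (∫ x in Ωn,
          |u x| / x ⟨d - 1, by omega⟩ *
            ((∏ i ∈ Finset.Icc 1 (m - 1), Lrec i (x ⟨d - 1, by omega⟩ / R)) *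
              Lrec m (x ⟨d - 1, by omega⟩ / R) ^ 2)) ≥
        1 / (((m : ℝ) + 1) * R ^ 2) * ∫ y in Q, |u' y|) ∧
    (∀ R : ℝ, 1 < R → ∀ α : ℝ, 1 ≤ α →
      Tendsto (fun N : ℕ => ∑ m ∈ Finset.Icc 2 N, α ^ m *
        ∫ x in Ωn,
          |u x| / x ⟨d - 1, by omega⟩ *
            ((∏ i ∈ Finset.Icc 1 (m - 1), Lrec i (x ⟨d - 1, by omega⟩ / R)) *
              Lrec m (x ⟨d - 1, by omega⟩ / R) ^ 2)) atTop atTop) := by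
  obtain ⟨k, rfl⟩ : ∃ k, d = k + 1 := ⟨d - 1, by omega⟩
  have hu2 : ∀ x : EuclideanSpace ℝ (Fin (k + 1)), u x = u' (WithLp.toLp 2 (fun i => x (Fin.castSucc i))) := by
    intro x; rw [hu]; rfl
  have hI : ∀ R : ℝ, 1 < R → ∀ m : ℕ, 1 ≤ m →
      (∫ x in Ωn, |u x| / x (Fin.last k) *
        ((∏ i ∈ Finset.Icc 1 (m - 1), Lrec i (x (Fin.last k) / R)) *
          Lrec m (x (Fin.last k) / R) ^ 2))
      = Lrec m (1 / R) * ∫ y in Q, |u' y| :=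
    fun R hR m hm => hardy_integral_eq k n Q hQ Ωn hΩn u' u hu2 R hR m hm
  have hL : (0:ℝ) ≤ ∫ y in Q, |u' y| := hu'pos.le
  refine ⟨fun R hR m hm => ?_, fun R hR α hα => ?_⟩
  · have h1 := hI R hR m (by omega)
    have h2 : 1 / (((m : ℝ) + 1) * R ^ 2) * ∫ y in Q, |u' y| ≤
        Lrec m (1 / R) * ∫ y in Q, |u' y| :=
      mul_le_mul_of_nonneg_right (Lrec_ge' hR (by omega)) hL
    exact le_trans h2 (le_of_eq h1.symm)
  · have hooR : (1:ℝ) / R ∈ Set.Ioo (0:ℝ) 1 := by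
      constructor
      · positivity
      · rw [div_lt_one (by linarith)]; linarith
    have hmono : ∀ N : ℕ,
        ∑ m ∈ Finset.Icc 2 N, 1 / (((m : ℝ) + 1) * R ^ 2) * ∫ y in Q, |u' y| ≤
        ∑ m ∈ Finset.Icc 2 N, α ^ m *
          ∫ x in Ωn, |u x| / x (Fin.last k) *
            ((∏ i ∈ Finset.Icc 1 (m - 1), Lrec i (x (Fin.last k) / R)) *
              Lrec m (x (Fin.last k) / R) ^ 2) := by
      intro N
      apply Finset.sum_le_sum
      intro m hm
      have hm2 : 2 ≤ m := (Finset.mem_Icc.mp hm).1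
      have h1 := hI R hR m (by omega)
      have hLrec := Lrec_mem_Ioo hooR m (by omega)
      have key1 : 1 / (((m : ℝ) + 1) * R ^ 2) * ∫ y in Q, |u' y| ≤
          Lrec m (1 / R) * ∫ y in Q, |u' y| :=
        mul_le_mul_of_nonneg_right (Lrec_ge' hR (by omega)) hL
      have key2 : (0:ℝ) ≤ Lrec m (1 / R) * ∫ y in Q, |u' y| :=
        mul_nonneg hLrec.1.le hL
      have key3 : Lrec m (1 / R) * ∫ y in Q, |u' y| ≤
          α ^ m * (Lrec m (1 / R) * ∫ y in Q, |u' y|) :=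
        le_mul_of_one_le_left key2 (one_le_pow₀ hα : (1:ℝ) ≤ α ^ m)
      exact le_trans key1 (le_trans key3 (le_of_eq (congrArg (fun z => α ^ m * z) h1.symm)))
    have hdiv : Tendsto (fun N : ℕ =>
        ∑ m ∈ Finset.Icc 2 N, 1 / (((m : ℝ) + 1) * R ^ 2) * ∫ y in Q, |u' y|)
        atTop atTop := by
      have hR0 : (R:ℝ) ≠ 0 := by linarith
      have h0 : ∀ N : ℕ,
          ∑ m ∈ Finset.Icc 2 N, 1 / (((m : ℝ) + 1) * R ^ 2) * ∫ y in Q, |u' y|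
          = (∑ m ∈ Finset.Icc 2 N, 1 / ((m : ℝ) + 1)) * ((∫ y in Q, |u' y|) / R ^ 2) := by
        intro N
        rw [Finset.sum_mul]
        apply Finset.sum_congr rfl
        intro m _
        have : ((m : ℝ) + 1) ≠ 0 := by positivity
        field_simp
      have h1 : Tendsto (fun N : ℕ => ∑ m ∈ Finset.Icc 2 N, 1 / ((m : ℝ) + 1))
          atTop atTop := by
        have hh := Real.tendsto_sum_range_one_div_nat_succ_atTop
        have heq : ∀ N : ℕ, 1 ≤ N → ∑ m ∈ Finset.Icc 2 N, 1 / ((m : ℝ) + 1)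
            = (∑ i ∈ Finset.range (N + 1), 1 / ((i : ℝ) + 1)) - (1 + 1 / 2) := by
          intro N hN
          rw [Finset.range_eq_Ico,
            ← Finset.sum_Ico_consecutive _ (Nat.zero_le 2) (by omega : 2 ≤ N + 1),
            show Finset.Ico 2 (N + 1) = Finset.Icc 2 N from Finset.Ico_add_one_right_eq_Icc 2 N,
            show Finset.Ico 0 2 = ({0, 1} : Finset ℕ) from rfl,
            Finset.sum_pair (by norm_num : (0:ℕ) ≠ 1)]
          norm_num
        have hcomp : Tendsto (fun N : ℕ => ∑ i ∈ Finset.range (N + 1), 1 / ((i : ℝ) + 1))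
            atTop atTop := hh.comp (tendsto_add_atTop_nat 1)
        have h3 := tendsto_atTop_add_const_right atTop (-(1 + 1 / 2 : ℝ)) hcomp
        have h4 : Tendsto (fun N : ℕ =>
            (∑ i ∈ Finset.range (N + 1), 1 / ((i : ℝ) + 1)) - (1 + 1 / 2))
            atTop atTop := h3.congr fun N => by ring
        refine h4.congr' ?_
        filter_upwards [eventually_ge_atTop 1] with N hN
        exact (heq N hN).symm
      have h5 : (0:ℝ) < (∫ y in Q, |u' y|) / R ^ 2 := by positivity
      have h6 := h1.atTop_mul_const h5
      exact h6.congr fun N => (h0 N).symm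
    exact tendsto_atTop_mono hmono hdiv
end

section
/- Let 0 < θ ≤ 1 and let m ≥ 1 be an integer. Then for all t ∈ (0,1): ℒ_m(t)^θ ≤ (2/θ)²·e^{θ−2}·ℒ_{m+1}(t)². Moreover, for every θ > 0 there exists a constant C = C(θ) > 0 such that ℒ_m(t)^θ ≤ C·ℒ_{m+1}(t)² for all t ∈ (0,1) and all integers m ≥ 1. -/
open Real

/-!
Write `ℒ_{m+1}(t) = 1/u` with `u = 1 - log ℒ_m(t) ≥ 1`. Then `ℒ_m(t)^θ = exp (θ (1 - u))`, and the
claim becomes `u² exp (-θ u) ≤ (2/θ)² exp (-2)`, which is `1 + x ≤ exp x` at `x = θ u / 2 - 1`,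
squared. The second claim then holds with `C(θ) = (2/θ)² e^{θ-2}`.
-/

lemma sq_le_mul_exp {θ u : ℝ} (hθ : 0 < θ) (hu : 0 ≤ u) :
    u ^ 2 ≤ (2 / θ) ^ 2 * exp (θ * u - 2) := by
  have hlin : u ≤ 2 / θ * exp (θ * u / 2 - 1) := by
    have := add_one_le_exp (θ * u / 2 - 1)
    rw [div_mul_eq_mul_div, le_div_iff₀ hθ]
    linarith
  calc u ^ 2 ≤ (2 / θ * exp (θ * u / 2 - 1)) ^ 2 := pow_le_pow_left₀ hu hlin 2
    _ = (2 / θ) ^ 2 * exp (θ * u - 2) := by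
      rw [mul_pow, sq (exp _), ← exp_add]
      ring_nf

lemma rpow_le_mul_one_div_one_sub_log_sq {θ s : ℝ} (hθ : 0 < θ) (hs0 : 0 < s) (hs : s < exp 1) :
    s ^ θ ≤ (2 / θ) ^ 2 * exp (θ - 2) * (1 / (1 - log s)) ^ 2 := by
  set u := 1 - log s with hu
  have hu0 : 0 < u := by
    have := (log_lt_iff_lt_exp hs0).2 hs
    linarith
  calc s ^ θ = exp (θ * (1 - u)) := by rw [rpow_def_of_pos hs0, hu]; ring_nf
    _ = exp (θ * (1 - u)) * u ^ 2 * (1 / u) ^ 2 := by field_simp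
    _ ≤ exp (θ * (1 - u)) * ((2 / θ) ^ 2 * exp (θ * u - 2)) * (1 / u) ^ 2 := by
        gcongr
        exact sq_le_mul_exp hθ hu0.le
    _ = (2 / θ) ^ 2 * exp (θ - 2) * (1 / u) ^ 2 := by
        congr 1
        rw [mul_left_comm, ← exp_add]
        ring_nf

lemma Lrec_pos_le_one {t : ℝ} (ht : t ∈ Set.Ioc (0 : ℝ) 1) (m : ℕ) :
    0 < Lrec m t ∧ Lrec m t ≤ 1 := by
  induction m with
  | zero => exact ht
  | succ n ih =>
    have hden : 1 ≤ 1 - log (Lrec n t) := by linarith [log_nonpos ih.1.le ih.2]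
    show 0 < 1 / (1 - log (Lrec n t)) ∧ 1 / (1 - log (Lrec n t)) ≤ 1
    exact ⟨one_div_pos.2 (by linarith), div_le_one_of_le₀ hden (by linarith)⟩

lemma Lrec_rpow_le {θ t : ℝ} (hθ : 0 < θ) (ht : t ∈ Set.Ioc (0 : ℝ) 1) (m : ℕ) :
    Lrec m t ^ θ ≤ (2 / θ) ^ 2 * exp (θ - 2) * Lrec (m + 1) t ^ 2 := by
  obtain ⟨h0, h1⟩ := Lrec_pos_le_one ht m
  exact rpow_le_mul_one_div_one_sub_log_sq hθ h0 (h1.trans_lt (one_lt_exp_iff.2 one_pos))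

theorem Lrec_pow_le_general (θ : ℝ) (hθ0 : 0 < θ) (m : ℕ) :
    (∀ t : ℝ, t ∈ Set.Ioo (0 : ℝ) 1 →
      Lrec m t ^ θ ≤ (2 / θ) ^ 2 * Real.exp (θ - 2) * Lrec (m + 1) t ^ 2) ∧
    ∀ θ' : ℝ, 0 < θ' → ∃ C > (0 : ℝ), ∀ t : ℝ, t ∈ Set.Ioo (0 : ℝ) 1 →
      ∀ m' : ℕ, 1 ≤ m' → Lrec m' t ^ θ' ≤ C * Lrec (m' + 1) t ^ 2 := by
  refine ⟨fun t ht => Lrec_rpow_le hθ0 (Set.Ioo_subset_Ioc_self ht) m, fun θ' hθ' => ?_⟩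
  exact ⟨(2 / θ') ^ 2 * exp (θ' - 2), by positivity,
    fun t ht m' _ => Lrec_rpow_le hθ' (Set.Ioo_subset_Ioc_self ht) m'⟩

theorem Lrec_pow_le (θ : ℝ) (hθ0 : 0 < θ) (hθ1 : θ ≤ 1) (m : ℕ) (hm : 1 ≤ m) :
    (∀ t : ℝ, t ∈ Set.Ioo (0 : ℝ) 1 →
      Lrec m t ^ θ ≤ (2 / θ) ^ 2 * Real.exp (θ - 2) * Lrec (m + 1) t ^ 2) ∧
    ∀ θ' : ℝ, 0 < θ' → ∃ C > (0 : ℝ), ∀ t : ℝ, t ∈ Set.Ioo (0 : ℝ) 1 →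
      ∀ m' : ℕ, 1 ≤ m' → Lrec m' t ^ θ' ≤ C * Lrec (m' + 1) t ^ 2 :=
  Lrec_pow_le_general θ hθ0 m
end
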